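/- Let n ≥ 1 and let k₁,…,k_{2n} be integers satisfying |k_j − k_{j+1}| ≥ 1 for every j = 1,…,2n−1. Then the integral I'ₙ = ∫_{−π}^{π} [sin((k₁+k_{2n})η/2)/sin(η/2)] · ∏_{j=1}^{2n−1} [sin((k_j−k_{j+1})η/2) / ((k_j−k_{j+1}) sin(η/2))] dη satisfies |I'ₙ| ≤ 2π. (The integrand, defined for η ∈ (−π,π)∖{0}, is bounded — each quotient sin(mη/2)/sin(η/2) is bounded by |m| — so the integral is an ordinary Lebesgue integral.) -/

import Mathlib

/-!
Put `θ = η / 2`. For `m : ℕ`, `sin (m θ) / sin θ = ∑_{r < m} exp (i (2r + 1 - m) θ)`, so each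
factor `sin (d θ) / (d sin θ)` is the average of `|d|` unimodular exponentials, and the first
factor is `± ∑_{r < |k₁ + k_{2n}|} exp (i (2r + 1 - |k₁ + k_{2n}|) θ)`. Expanding the product,
the integral is `±` the average, over `∏ |k_j - k_{j+1}|` choices, of integrals of a first-factor
sum times one exponential `exp (i c θ)`. Since there are `2n` factors and
`∑ (k_j - k_{j+1}) = k₁ - k_{2n}`, all frequencies of such a product are even multiples of `θ`,
i.e. integer multiples of `η`; they are moreover distinct, so its integral over `(-π, π)` is
`2π` or `0`.
-/

open Real intervalIntegral
open Complex Finset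
open scoped Interval

noncomputable def dirichletKernel (m : ℕ) (z : ℂ) : ℂ :=
  ∑ r ∈ range m, exp (((2 * r + 1 - m : ℤ) : ℂ) * z * I)

@[fun_prop]
theorem continuous_dirichletKernel (m : ℕ) : Continuous (dirichletKernel m) := by
  unfold dirichletKernel
  fun_prop

theorem sin_natCast_mul_eq_sin_mul_dirichletKernel (m : ℕ) (z : ℂ) :
    Complex.sin (m * z) = Complex.sin z * dirichletKernel m z := by
  set e : ℕ → ℂ := fun r => exp (((2 * r - m : ℤ) : ℂ) * z * I)
  have hterm (r : ℕ) :
      Complex.sin z * exp (((2 * r + 1 - m : ℤ) : ℂ) * z * I) = I / 2 * (e r - e (r + 1)) := by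
    have hl : ((2 * r - m : ℤ) : ℂ) * z * I =
        -z * I + ((2 * r + 1 - m : ℤ) : ℂ) * z * I := by
      push_cast; ring
    have hr : ((2 * (r + 1 : ℕ) - m : ℤ) : ℂ) * z * I =
        z * I + ((2 * r + 1 - m : ℤ) : ℂ) * z * I := by
      push_cast; ring
    simp only [e, hl, hr, Complex.exp_add, Complex.sin]
    ring
  rw [dirichletKernel, mul_sum, sum_congr rfl fun r _ => hterm r, ← mul_sum, sum_range_sub',
    Complex.sin]
  simp only [e]
  push_cast
  ring_nf

theorem Complex.sin_intCast_mul (d : ℤ) (z : ℂ) :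
    Complex.sin (d * z) = d.sign * Complex.sin (d.natAbs * z) := by
  obtain ⟨m, rfl | rfl⟩ := Int.eq_nat_or_neg d
  · rcases Nat.eq_zero_or_pos m with rfl | hm
    · simp
    · simp [Int.sign_natCast_of_ne_zero hm.ne']
  · rcases Nat.eq_zero_or_pos m with rfl | hm
    · simp
    · simp [Int.sign_natCast_of_ne_zero hm.ne', neg_mul, Complex.sin_neg]

theorem sin_intCast_mul_div_sin (d : ℤ) {z : ℂ} (hz : Complex.sin z ≠ 0) :
    Complex.sin (d * z) / Complex.sin z = d.sign * dirichletKernel d.natAbs z := by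
  rw [Complex.sin_intCast_mul, sin_natCast_mul_eq_sin_mul_dirichletKernel]
  field_simp

theorem sin_intCast_mul_div_intCast_mul_sin (d : ℤ) {z : ℂ} (hz : Complex.sin z ≠ 0) :
    Complex.sin (d * z) / (d * Complex.sin z) =
      (d.natAbs : ℂ)⁻¹ * dirichletKernel d.natAbs z := by
  rcases eq_or_ne d 0 with rfl | hd
  · simp
  have hsign : (d.sign : ℂ) ≠ 0 := by simp [hd]
  have hcast : (d : ℂ) = d.sign * d.natAbs := by
    rw [← Int.cast_natCast, ← Int.cast_mul, Int.sign_mul_natAbs]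
  rw [div_mul_eq_div_div_swap, sin_intCast_mul_div_sin d hz, hcast, mul_div_mul_left _ _ hsign,
    div_eq_inv_mul]

def dirichletFreq {ι : Type*} [Fintype ι] (m x : ι → ℕ) : ℤ :=
  ∑ i, (2 * x i + 1 - m i : ℤ)

theorem prod_dirichletKernel {ι : Type*} [Fintype ι] [DecidableEq ι] (m : ι → ℕ) (z : ℂ) :
    ∏ i, dirichletKernel (m i) z =
      ∑ x ∈ Fintype.piFinset fun i => range (m i), exp (dirichletFreq m x * z * I) := by
  simp only [dirichletKernel, prod_univ_sum, dirichletFreq, ← Complex.exp_sum]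
  push_cast
  simp only [sum_mul]

theorem dirichletFreq_cast_zmod_two {ι : Type*} [Fintype ι] (m x : ι → ℕ) :
    (dirichletFreq m x : ZMod 2) = ∑ i, ((m i : ZMod 2) + 1) := by
  have h (a b : ZMod 2) : 2 * a + 1 - b = b + 1 := by decide +revert
  simp only [dirichletFreq]
  push_cast
  exact sum_congr rfl fun i _ => h _ _

theorem integral_exp_intCast_mul_I (q : ℤ) :
    ∫ η in (-π)..π, exp (q * η * I) = if q = 0 then (2 * π : ℂ) else 0 := by
  split_ifs with hq
  · simp [hq, two_mul]
  have hqI : (q : ℂ) * I ≠ 0 := by simp [hq]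
  simp_rw [mul_right_comm _ _ I]
  have hperiodic : exp (q * I * π) = exp (q * I * (-π : ℝ)) := by
    rw [show (q : ℂ) * I * π = q * I * (-π : ℝ) + q * (2 * π * I) by push_cast; ring,
      Complex.exp_add, Complex.exp_int_mul_two_pi_mul_I, mul_one]
  rw [integral_exp_mul_complex hqI, hperiodic, sub_self, zero_div]

theorem norm_integral_sum_exp_intCast_mul_I_le (s : Finset ℤ) :
    ‖∫ η in (-π)..π, ∑ q ∈ s, exp (q * η * I)‖ ≤ 2 * π := by
  rw [integral_finsetSum fun q _ => (by fun_prop : Continuous _).intervalIntegrable _ _]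
  simp_rw [integral_exp_intCast_mul_I, sum_ite_eq' s 0]
  split_ifs <;> simp [abs_of_pos pi_pos, pi_pos.le]

theorem norm_integral_dirichletKernel_mul_exp_le (m : ℕ) {c : ℤ} (hc : Odd (c + m)) :
    ‖∫ η in (-π)..π, dirichletKernel m (η / 2) * exp (c * (η / 2) * I)‖ ≤ 2 * π := by
  obtain ⟨q, hq⟩ := hc
  have hc : (c : ℂ) = 2 * q + 1 - m := by
    rw [show c = 2 * q + 1 - m by omega]
    push_cast
    ring
  have hinj : Set.InjOn (fun r : ℕ => (r + q + 1 - m : ℤ)) (range m) :=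
    fun a _ b _ h => by simpa using h
  have hsum (η : ℝ) : dirichletKernel m (η / 2) * exp (c * (η / 2) * I) =
      ∑ p ∈ (range m).image fun r : ℕ => (r + q + 1 - m : ℤ), exp (p * η * I) := by
    rw [sum_image hinj, dirichletKernel, sum_mul]
    refine sum_congr rfl fun r _ => ?_
    rw [← Complex.exp_add, hc]
    push_cast
    ring_nf
  simp_rw [hsum]
  exact norm_integral_sum_exp_intCast_mul_I_le _

theorem norm_integral_dirichletKernel_mul_sum_exp_le {κ : Type*} (m : ℕ) (s : Finset κ)
    (c : κ → ℤ) (hc : ∀ x ∈ s, Odd (c x + m)) :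
    ‖∫ η in (-π)..π, dirichletKernel m (η / 2) * ∑ x ∈ s, exp (c x * (η / 2) * I)‖ ≤
      2 * π * #s := by
  simp_rw [mul_sum]
  rw [integral_finsetSum fun x _ => (by fun_prop : Continuous _).intervalIntegrable _ _]
  calc _ ≤ ∑ x ∈ s, ‖∫ η in (-π)..π, dirichletKernel m (η / 2) * exp (c x * (η / 2) * I)‖ :=
        norm_sum_le _ _
    _ ≤ ∑ _x ∈ s, 2 * π :=
        sum_le_sum fun x hx => norm_integral_dirichletKernel_mul_exp_le m (hc x hx)
    _ = 2 * π * #s := by rw [sum_const, nsmul_eq_mul, mul_comm]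

theorem ofReal_sin_mul_div_sin_mul_prod {ι : Type*} [DecidableEq ι] (S : ℤ) (s : Finset ι)
    (d : ι → ℤ) {η : ℝ} (hη : Real.sin (η / 2) ≠ 0) :
    ((Real.sin (S * η / 2) / Real.sin (η / 2) *
        ∏ i ∈ s, Real.sin (d i * η / 2) / (d i * Real.sin (η / 2)) : ℝ) : ℂ) =
      S.sign * ((∏ i ∈ s, (d i).natAbs : ℕ) : ℂ)⁻¹ *
        (dirichletKernel S.natAbs (η / 2) *
          ∑ x ∈ Fintype.piFinset fun i : s => range (d i).natAbs,
            exp (dirichletFreq (fun i : s => (d i).natAbs) x * (η / 2) * I)) := by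
  have hz : Complex.sin (η / 2) ≠ 0 := by exact_mod_cast hη
  simp only [Complex.ofReal_mul, Complex.ofReal_div, Complex.ofReal_prod, Complex.ofReal_sin,
    Complex.ofReal_intCast, Complex.ofReal_ofNat, mul_div_assoc, Nat.cast_prod]
  rw [← prod_coe_sort s, ← prod_coe_sort s]
  simp only [sin_intCast_mul_div_sin S hz, sin_intCast_mul_div_intCast_mul_sin _ hz,
    prod_mul_distrib, prod_dirichletKernel, prod_inv_distrib]
  ring

theorem sin_half_ne_zero_of_mem_uIoc {η : ℝ} (hη : η ∈ Ι (-π) π) (h0 : η ≠ 0) :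
    Real.sin (η / 2) ≠ 0 := by
  rw [Set.uIoc_of_le (by linarith [pi_pos])] at hη
  rw [Ne, Real.sin_eq_zero_iff_of_lt_of_lt (by linarith [hη.1, pi_pos])
    (by linarith [hη.2, pi_pos])]
  exact div_ne_zero h0 two_ne_zero

theorem abs_integral_sin_mul_div_sin_mul_prod_le {ι : Type*} (S : ℤ) (s : Finset ι)
    (d : ι → ℤ) (hodd : Odd (S + ∑ i ∈ s, (d i + 1))) :
    |∫ η in (-π)..π, Real.sin (S * η / 2) / Real.sin (η / 2) *
        ∏ i ∈ s, Real.sin (d i * η / 2) / (d i * Real.sin (η / 2))| ≤ 2 * π := by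
  classical
  set A := ∏ i ∈ s, (d i).natAbs
  set X := Fintype.piFinset fun i : s => range (d i).natAbs
  set c := dirichletFreq fun i : s => (d i).natAbs
  have hc : ∀ x ∈ X, Odd (c x + S.natAbs) := fun x _ => by
    rw [← ZMod.intCast_eq_one_iff_odd] at hodd ⊢
    rw [Int.cast_add, dirichletFreq_cast_zmod_two, Int.cast_natCast, ZMod.natAbs_mod_two]
    simp only [ZMod.natAbs_mod_two]
    rw [sum_coe_sort s fun i => (d i : ZMod 2) + 1]
    push_cast at hodd
    linear_combination hodd
  have hae : ∀ᵐ η : ℝ, η ∈ Ι (-π) π →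
      ((Real.sin (S * η / 2) / Real.sin (η / 2) *
        ∏ i ∈ s, Real.sin (d i * η / 2) / (d i * Real.sin (η / 2)) : ℝ) : ℂ) =
        S.sign * (A : ℂ)⁻¹ *
          (dirichletKernel S.natAbs (η / 2) * ∑ x ∈ X, exp (c x * (η / 2) * I)) := by
    filter_upwards [MeasureTheory.volume.ae_ne 0] with η hη0 hη
    exact ofReal_sin_mul_div_sin_mul_prod S s d (sin_half_ne_zero_of_mem_uIoc hη hη0)
  rw [← Real.norm_eq_abs, ← Complex.norm_real, ← intervalIntegral.integral_ofReal,
    integral_congr_ae hae, integral_const_mul, norm_mul, norm_mul, norm_inv, Complex.norm_natCast]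
  have hsign : ‖(S.sign : ℂ)‖ ≤ 1 := by
    rcases Int.sign_trichotomy S with h | h | h <;> simp [h]
  have hcard : #X = A := by simp [X, A, prod_attach s fun i => (d i).natAbs]
  calc _ ≤ 1 * (A : ℝ)⁻¹ * (2 * π * A) := by
        gcongr
        simpa [hcard] using norm_integral_dirichletKernel_mul_sum_exp_le _ X c hc
    _ ≤ 2 * π := by
        rw [one_mul, mul_left_comm]
        exact mul_le_of_le_one_right (by positivity) (inv_mul_le_one_of_le₀ le_rfl A.cast_nonneg)

theorem abs_In'_le_two_pi (n : ℕ) (hn : 1 ≤ n) (k : ℕ → ℤ) :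
    |∫ η in (-π)..π,
        (Real.sin (((k 1 + k (2 * n) : ℤ) : ℝ) * η / 2) / Real.sin (η / 2)) *
          ∏ j ∈ Finset.Icc 1 (2 * n - 1),
            Real.sin (((k j - k (j + 1) : ℤ) : ℝ) * η / 2) /
              (((k j - k (j + 1) : ℤ) : ℝ) * Real.sin (η / 2))|
      ≤ 2 * π := by
  have htelescope : ∑ j ∈ Icc 1 (2 * n - 1), (k j - k (j + 1)) = k 1 - k (2 * n) := by
    calc ∑ j ∈ Icc 1 (2 * n - 1), (k j - k (j + 1))
        = -∑ j ∈ Icc 1 (2 * n - 1), (k (j + 1) - k j) := by simp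
      _ = k 1 - k (2 * n) := by
        rw [sum_Icc_sub (by omega : 1 ≤ 2 * n - 1), show 2 * n - 1 + 1 = 2 * n by omega, neg_sub]
  refine abs_integral_sin_mul_div_sin_mul_prod_le _ _ (fun j => k j - k (j + 1)) ?_
  rw [sum_add_distrib, htelescope, sum_const, Nat.card_Icc,
    show 2 * n - 1 + 1 - 1 = 2 * (n - 1) + 1 by omega]
  exact ⟨k 1 + (n - 1 : ℕ), by ring⟩
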